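/- (Theorem 2, all-symbol locality construction) Let q be a prime power, F_q the field with q elements, and F an extension of F_q of degree m. Let n_L, α, t, K be positive integers, let a_1 ≥ … ≥ a_{n_L} ≥ 0 be integers with K_L := P(n_L) ≥ 1, and assume K ≤ t·K_L and m ≥ t·K_L. Let B be a K_L × (n_L·α) URA matrix over F_q with profile (a_1,…,a_{n_L}), let G_BASIC be the block-diagonal matrix with t diagonal copies of B (so G_BASIC has n := t·n_L thick columns of width α), and let θ_1,…,θ_{tK_L} ∈ F be linearly independent over F_q. Let C ⊆ F^{nα} consist of all vectors (f(θ_1),…,f(θ_{tK_L}))·G_BASIC, where f ranges over linearized polynomials of q-degree at most K−1 over F. Then the map f ↦ (f(θ_1),…,f(θ_{tK_L}))·G_BASIC is injective, and the minimum thick Hamming distance of C, viewed as a length-n code over the alphabet F^α, is exactly d_min = n − P^{inv}(K) + 1; in particular the construction attains the bound d_min ≤ n − P^{inv}(K) + 1 with equality. -/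

import Mathlib

/-- Partial sums `P(s) = a_1 + … + a_s` of a (0-indexed) sequence `a : ℕ → ℕ`. -/
def Pfun (a : ℕ → ℕ) (s : ℕ) : ℕ := ∑ i ∈ Finset.range s, a i

/-- `Pinv ν` is the smallest integer `s` with `P(s) ≥ ν`. -/
noncomputable def Pinv (a : ℕ → ℕ) (ν : ℕ) : ℕ := sInf {s : ℕ | ν ≤ Pfun a s}

/-- The rank of the submatrix of `G` formed by the thick columns indexed by `S`. -/
noncomputable def thickRank {K : Type*} [Field K] {R C : Type*} [Fintype C] [DecidableEq C]
    {α : ℕ} (G : Matrix R (C × Fin α) K) (S : Finset C) : ℕ :=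
  (G.submatrix id (fun p : {p : C × Fin α // p.1 ∈ S} => (p : C × Fin α))).rank

/- The thick Hamming distance between two words over the alphabet `F^α`, the thick
positions being indexed by `C`. -/
open scoped Classical in
noncomputable def thickDist {F C : Type*} [Fintype C] {α : ℕ}
    (v w : C × Fin α → F) : ℕ :=
  (Finset.univ.filter fun j : C => ∃ a, v (j, a) ≠ w (j, a)).card

/-!
A nonzero linearized polynomial `f` of `q`-degree `< K` is `F_q`-linear and has at most
`q^(K-1)` roots, so its kernel is an `F_q`-subspace of dimension `< K`. The codeword of `f`
vanishes on a set `S` of thick positions iff `f` kills the image under `λ ↦ ∑ λ_i θ_i` of the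
column space of `G_BASIC|_S`; as the `θ_i` are independent this image has dimension
`rank G_BASIC|_S`, which by the block structure and the URA property is `∑_b P(|S_b|)`, where
`S_b` is the part of `S` in the `b`-th copy of `B`. Hence `S` is contained in the zero set of a
nonzero codeword iff `∑_b P(|S_b|) < K`. Since `P` is subadditive, `∑_b P(|S_b|) ≥ P(|S|)`, so
such an `S` has fewer than `P^{inv}(K)` elements; conversely filling the blocks one after the
other gives a set of `P^{inv}(K) - 1` positions with `∑_b P(|S_b|) = P(P^{inv}(K) - 1) < K`.
-/

section Profile

open Finset

variable {a : ℕ → ℕ} {n : ℕ}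

@[simp] theorem Pfun_zero : Pfun a 0 = 0 := rfl

theorem Pfun_mono : Monotone (Pfun a) := fun _ _ h => sum_le_sum_of_subset (range_subset_range.2 h)

theorem Pfun_add (s z : ℕ) : Pfun a (s + z) = Pfun a s + ∑ i ∈ range z, a (s + i) :=
  sum_range_add a s z

theorem Pfun_add_period (hper : Function.Periodic a n) (s : ℕ) :
    Pfun a (n + s) = Pfun a n + Pfun a s := by
  rw [Pfun_add]
  exact congrArg _ (sum_congr rfl fun i _ => by rw [add_comm]; exact hper i)

theorem Pfun_mul_add (hper : Function.Periodic a n) (k s : ℕ) :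
    Pfun a (k * n + s) = k * Pfun a n + Pfun a s := by
  induction k with
  | zero => simp
  | succ k ih => rw [add_mul, one_mul, add_comm _ n, add_assoc, Pfun_add_period hper, ih]; ring

theorem Pfun_add_add_le (hanti : AntitoneOn a (Set.Iio n)) {x y l : ℕ} (hyx : y ≤ x)
    (hx : x + l ≤ n) : Pfun a (x + l) + Pfun a y ≤ Pfun a (y + l) + Pfun a x := by
  have : ∑ i ∈ range l, a (x + i) ≤ ∑ i ∈ range l, a (y + i) :=
    sum_le_sum fun i hi => hanti (show y + i < n by simp at hi; omega)
      (show x + i < n by simp at hi; omega) (by omega)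
  rw [Pfun_add, Pfun_add]
  omega

theorem Pfun_add_le_of_lt (hper : Function.Periodic a n) (hanti : AntitoneOn a (Set.Iio n))
    {s z : ℕ} (hs : s < n) (hz : z < n) : Pfun a (s + z) ≤ Pfun a s + Pfun a z := by
  rcases le_or_gt (s + z) n with h | h
  · simpa [add_comm] using Pfun_add_add_le hanti (Nat.zero_le s) h
  · -- `P (s + z) = P n + P (s + z - n)`, and concavity gives `P n + P (s + z - n) ≤ P z + P s`
    have hconc := Pfun_add_add_le hanti (show s + z - n ≤ z by omega)
      (show z + (n - z) ≤ n by omega)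
    have hwrap := Pfun_add_period hper (s + z - n)
    rw [show z + (n - z) = n by omega, show s + z - n + (n - z) = s by omega] at hconc
    rw [show n + (s + z - n) = s + z by omega] at hwrap
    omega

theorem Pfun_add_le (hn : 0 < n) (hper : Function.Periodic a n)
    (hanti : AntitoneOn a (Set.Iio n)) (s z : ℕ) : Pfun a (s + z) ≤ Pfun a s + Pfun a z := by
  have hsmall := Pfun_add_le_of_lt hper hanti (Nat.mod_lt s hn) (Nat.mod_lt z hn)
  have hs := Pfun_mul_add hper (s / n) (s % n)
  have hz := Pfun_mul_add hper (z / n) (z % n)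
  have hsz := Pfun_mul_add hper (s / n + z / n) (s % n + z % n)
  rw [Nat.div_add_mod'] at hs hz
  rw [show (s / n + z / n) * n + (s % n + z % n) = s + z by
    linarith [Nat.div_add_mod' s n, Nat.div_add_mod' z n]] at hsz
  rw [hs, hz, hsz, add_mul]
  omega

theorem Pfun_min_add_Pfun_sub (hper : Function.Periodic a n) (s : ℕ) :
    Pfun a (min n s) + Pfun a (s - n) = Pfun a s := by
  rcases le_total n s with h | h
  · rw [min_eq_left h, ← Pfun_add_period hper, Nat.add_sub_cancel' h]
  · simp [min_eq_right h, Nat.sub_eq_zero_of_le h]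

theorem sum_range_apply_min_sub_mul {g : ℕ → ℕ} (hg0 : g 0 = 0)
    (hg : ∀ s, g (min n s) + g (s - n) = g s) {t s : ℕ} (hs : s ≤ t * n) :
    ∑ b ∈ range t, g (min n (s - n * b)) = g s := by
  induction t generalizing s with
  | zero => simp_all
  | succ t ih =>
    rw [sum_range_succ', ← hg s, ← ih (s := s - n) (by rw [add_mul] at hs; omega)]
    simp [Nat.sub_sub, mul_add, add_comm]

theorem Pinv_le {K s : ℕ} (h : K ≤ Pfun a s) : Pinv a K ≤ s := Nat.sInf_le h

theorem Pfun_lt_of_lt_Pinv {K s : ℕ} (h : s < Pinv a K) : Pfun a s < K :=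
  not_le.1 (Nat.notMem_of_lt_sInf (s := {s | K ≤ Pfun a s}) h)

theorem lt_Pinv_of_Pfun_lt {K s s' : ℕ} (hs' : K ≤ Pfun a s') (h : Pfun a s < K) :
    s < Pinv a K := by
  by_contra! h'
  exact h.not_ge ((Nat.sInf_mem (s := {s | K ≤ Pfun a s}) ⟨s', hs'⟩).trans (Pfun_mono h'))

theorem Pinv_pos {K s : ℕ} (hK : 0 < K) (hs : K ≤ Pfun a s) : 0 < Pinv a K :=
  lt_Pinv_of_Pfun_lt hs (by simpa)

end Profile

section BlockSlice

open Finset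

variable {ι κ : Type*} [Fintype ι] [DecidableEq ι] [Fintype κ] [DecidableEq κ]

def blockSlice (S : Finset (ι × κ)) (b : ι) : Finset κ := univ.filter fun j => (b, j) ∈ S

theorem card_eq_sum_card_blockSlice (S : Finset (ι × κ)) :
    S.card = ∑ b, (blockSlice S b).card := by
  simp only [blockSlice, card_filter]
  rw [← Fintype.sum_prod_type' (fun b j => if (b, j) ∈ S then 1 else 0), sum_boole]
  simp

theorem Pfun_card_le_sum_Pfun_card_blockSlice {a : ℕ → ℕ} {n : ℕ} (hn : 0 < n)
    (hper : Function.Periodic a n) (hanti : AntitoneOn a (Set.Iio n)) (S : Finset (ι × κ)) :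
    Pfun a S.card ≤ ∑ b, Pfun a (blockSlice S b).card :=
  card_eq_sum_card_blockSlice S ▸
    le_sum_of_subadditive (Pfun a) le_rfl (Pfun_add_le hn hper hanti) _ _

theorem exists_card_eq_and_sum_Pfun_card_blockSlice {a : ℕ → ℕ} {n : ℕ}
    (hper : Function.Periodic a n) {t s : ℕ} (hs : s ≤ t * n) :
    ∃ S : Finset (Fin t × Fin n),
      S.card = s ∧ ∑ b, Pfun a (blockSlice S b).card = Pfun a s := by
  -- the first `s` positions when the blocks are filled one after the other
  let S := univ.filter fun x : Fin t × Fin n => (x.2 : ℕ) < s - n * x.1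
  have hslice : ∀ b, (blockSlice S b).card = min n (s - n * b) := fun b => by
    simp [blockSlice, S, Fin.card_filter_val_lt]
  refine ⟨S, ?_, ?_⟩
  · rw [card_eq_sum_card_blockSlice]
    simp_rw [hslice]
    rw [Fin.sum_univ_eq_sum_range (fun b => min n (s - n * b))]
    exact sum_range_apply_min_sub_mul (g := id) rfl (fun s => by simp only [id]; omega) hs
  · simp_rw [hslice]
    rw [Fin.sum_univ_eq_sum_range (fun b => Pfun a (min n (s - n * b)))]
    exact sum_range_apply_min_sub_mul Pfun_zero (Pfun_min_add_Pfun_sub hper) hs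

end BlockSlice

section ColSpan

open Module

variable {𝕜 : Type*} [Field 𝕜] {α : ℕ}

def colSpan {R C : Type*} (M : Matrix R (C × Fin α) 𝕜) (S : Finset C) :
    Submodule 𝕜 (R → 𝕜) :=
  Submodule.span 𝕜 (Set.range fun p : {p : C × Fin α // p.1 ∈ S} => fun i => M i p)

instance {R C : Type*} [Finite C] (M : Matrix R (C × Fin α) 𝕜) (S : Finset C) :
    FiniteDimensional 𝕜 (colSpan M S) :=
  FiniteDimensional.span_of_finite 𝕜 (Set.finite_range _)

theorem finrank_colSpan {R C : Type*} [Fintype C] [DecidableEq C] (M : Matrix R (C × Fin α) 𝕜)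
    (S : Finset C) : finrank 𝕜 (colSpan M S) = thickRank M S := by
  rw [thickRank, Matrix.rank, Matrix.range_mulVecLin]
  rfl

theorem Submodule.finrank_pi_univ {ι M : Type*} [Fintype ι] [AddCommGroup M] [Module 𝕜 M]
    (V : ι → Submodule 𝕜 M) [∀ b, FiniteDimensional 𝕜 (V b)] :
    finrank 𝕜 (Submodule.pi Set.univ V) = ∑ b, finrank 𝕜 (V b) := by
  have hrange : LinearMap.range (LinearMap.piMap fun b => (V b).subtype) =
      Submodule.pi Set.univ V := by
    ext x
    simp only [LinearMap.mem_range, Submodule.mem_pi, Set.mem_univ, true_implies]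
    exact ⟨fun ⟨y, hy⟩ b => hy ▸ (y b).2, fun h => ⟨fun b => ⟨x b, h b⟩, rfl⟩⟩
  rw [← hrange, LinearMap.finrank_range_of_inj
    (Function.Injective.piMap fun b => (V b).injective_subtype), Module.finrank_pi_fintype]

variable {ι ρ κ : Type*} [Fintype ι] [DecidableEq ι] [Fintype κ] [DecidableEq κ]
  {B : Matrix ρ (κ × Fin α) 𝕜} {G : Matrix (ι × ρ) ((ι × κ) × Fin α) 𝕜}

theorem map_curry_colSpan_eq_pi
    (hG : ∀ b i b' j c, G (b, i) ((b', j), c) = if b = b' then B i (j, c) else 0)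
    (S : Finset (ι × κ)) :
    (colSpan G S).map (LinearEquiv.curry 𝕜 𝕜 ι ρ).toLinearMap =
      Submodule.pi Set.univ fun b => colSpan B (blockSlice S b) := by
  have hcol : ∀ b j c,
      Function.curry (fun i => G i ((b, j), c)) = Pi.single b fun i => B i (j, c) := by
    intro b j c
    ext b' i
    rcases eq_or_ne b b' with rfl | h
    · simp [hG]
    · simp [hG, Ne.symm h]
  rw [← Submodule.iSup_map_single]
  simp_rw [colSpan, Submodule.map_span, ← Submodule.span_iUnion]
  congr 1
  ext x
  simp [hcol, blockSlice]

theorem thickRank_eq_sum_thickRank_blockSlice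
    (hG : ∀ b i b' j c, G (b, i) ((b', j), c) = if b = b' then B i (j, c) else 0)
    (S : Finset (ι × κ)) :
    thickRank G S = ∑ b, thickRank B (blockSlice S b) := by
  rw [← finrank_colSpan, ← LinearEquiv.finrank_map_eq (LinearEquiv.curry 𝕜 𝕜 ι ρ),
    map_curry_colSpan_eq_pi hG, Submodule.finrank_pi_univ]
  simp_rw [finrank_colSpan]

end ColSpan

section LinearizedPoly

open Module Polynomial

variable {F : Type*} [Field F] (Fq : Subfield F) [Fintype Fq] {K : ℕ}

/-- `x ↦ ∑ u_l x^(q^l)`, written with powers of the Frobenius so that it is `F_q`-linear. -/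
noncomputable def linearizedPoly (u : Fin K → F) : F →ₗ[Fq] F :=
  ∑ l, u l • ((FiniteField.frobeniusAlgHom Fq F) ^ (l : ℕ)).toLinearMap

theorem linearizedPoly_apply (u : Fin K → F) (x : F) :
    linearizedPoly Fq u x = ∑ l, u l * x ^ Fintype.card Fq ^ (l : ℕ) := by
  simp [linearizedPoly, LinearMap.sum_apply, AlgHom.coe_pow, FiniteField.coe_frobeniusAlgHom]

theorem linearizedPoly_sub (u v : Fin K → F) :
    linearizedPoly Fq (u - v) = linearizedPoly Fq u - linearizedPoly Fq v := by
  ext x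
  simp [linearizedPoly_apply, sub_mul]

theorem eq_zero_of_le_ker_linearizedPoly {u : Fin K → F} {W : Submodule Fq F}
    [FiniteDimensional Fq W] (hW : K ≤ finrank Fq W)
    (hu : W ≤ LinearMap.ker (linearizedPoly Fq u)) : u = 0 := by
  classical
  by_contra hne
  obtain ⟨l₀, hl₀⟩ : ∃ l, u l ≠ 0 := Function.ne_iff.1 hne
  have : Finite W := Module.finite_of_finite Fq
  have : Fintype W := Fintype.ofFinite W
  set q := Fintype.card Fq
  have hq : 1 < q := Fintype.one_lt_card
  -- `P` is nonzero of degree `≤ q^(K-1)`, but vanishes on the `q^(dim W) ≥ q^K` points of `W`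
  let P : F[X] := ∑ l, C (u l) * X ^ q ^ (l : ℕ)
  have hP : P.coeff (q ^ (l₀ : ℕ)) = u l₀ := by
    simp only [P, finsetSum_coeff, coeff_C_mul_X_pow]
    rw [Finset.sum_eq_single l₀ (fun l _ hl => if_neg fun h => hl
      (Fin.ext (Nat.pow_right_injective hq h).symm)) (by simp), if_pos rfl]
  have hdeg : P.natDegree ≤ q ^ (K - 1) :=
    natDegree_sum_le_of_forall_le _ _ fun l _ => (natDegree_C_mul_X_pow_le _ _).trans
      (Nat.pow_le_pow_right (by omega) (by omega))
  have hroots : (Finset.univ.image ((↑) : W → F)).val ⊆ P.roots := by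
    intro x hx
    obtain ⟨w, -, rfl⟩ := Finset.mem_image.1 hx
    rw [mem_roots fun h => hl₀ (by rw [← hP, h, coeff_zero]), IsRoot.def]
    simpa [P, eval_finsetSum, linearizedPoly_apply] using hu w.2
  have hcard := card_le_degree_of_subset_roots hroots
  rw [Finset.card_image_of_injective _ Subtype.coe_injective, Finset.card_univ,
    card_eq_pow_finrank (K := Fq)] at hcard
  have hlt : q ^ (K - 1) < q ^ finrank Fq W :=
    (Nat.pow_lt_pow_right hq (Nat.sub_lt l₀.pos one_pos)).trans_le
      (Nat.pow_le_pow_right hq.le hW)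
  exact (hcard.trans hdeg).not_gt hlt

theorem exists_ne_zero_le_ker_linearizedPoly {W : Submodule Fq F} [FiniteDimensional Fq W]
    (hW : finrank Fq W < K) :
    ∃ u : Fin K → F, u ≠ 0 ∧ W ≤ LinearMap.ker (linearizedPoly Fq u) := by
  let b := Module.finBasis Fq W
  -- vanishing on the basis `b` is the system `M u = 0`, with fewer equations than unknowns
  let M : Matrix (Fin (finrank Fq W)) (Fin K) F := fun k l =>
    (b k : F) ^ Fintype.card Fq ^ (l : ℕ)
  obtain ⟨u, hu, hu0⟩ := Submodule.exists_mem_ne_zero_of_ne_bot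
    (LinearMap.ker_ne_bot_of_finrank_lt (f := M.mulVecLin) (by simpa using hW))
  have hMu : M.mulVec u = 0 := hu
  refine ⟨u, hu0, fun x hx => ?_⟩
  have hb : (linearizedPoly Fq u).comp W.subtype = 0 := b.ext fun k => by
    simpa [M, Matrix.mulVec, dotProduct, linearizedPoly_apply, mul_comm] using congrFun hMu k
  exact LinearMap.congr_fun hb ⟨x, hx⟩

end LinearizedPoly

section AgreeSet

open Finset

variable {F C : Type*} [Fintype C] {α : ℕ}

open scoped Classical in
noncomputable def agreeSet (v w : C × Fin α → F) : Finset C :=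
  univ.filter fun j => ∀ c, v (j, c) = w (j, c)

theorem mem_agreeSet {v w : C × Fin α → F} {j : C} :
    j ∈ agreeSet v w ↔ ∀ c, v (j, c) = w (j, c) := by
  simp [agreeSet]

theorem thickDist_eq_card_sub_card_agreeSet (v w : C × Fin α → F) :
    thickDist v w = Fintype.card C - (agreeSet v w).card := by
  classical
  rw [thickDist, agreeSet, ← card_univ, ← card_filter_add_card_filter_not (s := univ)
    (fun j => ∃ c, v (j, c) ≠ w (j, c))]
  simp

theorem thickDist_self (v : C × Fin α → F) : thickDist v v = 0 := by
  simp [thickDist]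

end AgreeSet

section LinearizedCode

open Module Finset

variable {F : Type*} [Field F] (Fq : Subfield F) {R C : Type*} [Fintype R] {α K : ℕ}

noncomputable def linearizedCode [Fintype Fq] (θ : R → F) (G : Matrix R (C × Fin α) Fq)
    (u : Fin K → F) : C × Fin α → F :=
  fun p => linearizedPoly Fq u (∑ i, G i p • θ i)

theorem linearizedCode_apply [Fintype Fq] (θ : R → F) (G : Matrix R (C × Fin α) Fq)
    (u : Fin K → F) (p : C × Fin α) :
    linearizedCode Fq θ G u p = ∑ i, linearizedPoly Fq u (θ i) * G i p := by
  rw [linearizedCode, map_sum]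
  refine sum_congr rfl fun i _ => ?_
  rw [map_smul, mul_comm]
  rfl

noncomputable def evalSpan (θ : R → F) (G : Matrix R (C × Fin α) Fq) (S : Finset C) :
    Submodule Fq F :=
  (colSpan G S).map (Fintype.linearCombination Fq θ)

instance [Finite C] (θ : R → F) (G : Matrix R (C × Fin α) Fq) (S : Finset C) :
    FiniteDimensional Fq (evalSpan Fq θ G S) :=
  Module.Finite.map _ _

theorem finrank_evalSpan_le [Fintype C] [DecidableEq C] (θ : R → F)
    (G : Matrix R (C × Fin α) Fq) (S : Finset C) :
    finrank Fq (evalSpan Fq θ G S) ≤ thickRank G S :=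
  finrank_colSpan G S ▸ Submodule.finrank_map_le _ _

theorem finrank_evalSpan [Fintype C] [DecidableEq C] {θ : R → F} (hθ : LinearIndependent Fq θ)
    (G : Matrix R (C × Fin α) Fq) (S : Finset C) :
    finrank Fq (evalSpan Fq θ G S) = thickRank G S := by
  rw [evalSpan, ← (Submodule.equivMapOfInjective _
    (linearIndependent_iff_injective_fintypeLinearCombination.1 hθ) _).finrank_eq,
    finrank_colSpan]

theorem subset_agreeSet_linearizedCode_iff [Fintype Fq] [Fintype C] (θ : R → F)
    (G : Matrix R (C × Fin α) Fq) (u v : Fin K → F) (S : Finset C) :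
    S ⊆ agreeSet (linearizedCode Fq θ G u) (linearizedCode Fq θ G v) ↔
      evalSpan Fq θ G S ≤ LinearMap.ker (linearizedPoly Fq (u - v)) := by
  rw [evalSpan, colSpan, Submodule.map_le_iff_le_comap, Submodule.span_le, Set.range_subset_iff]
  simp only [SetLike.mem_coe, Submodule.mem_comap, LinearMap.mem_ker,
    Fintype.linearCombination_apply, linearizedPoly_sub, LinearMap.sub_apply, sub_eq_zero,
    Subtype.forall, Prod.forall, subset_iff, mem_agreeSet, linearizedCode]
  exact ⟨fun h j c hj => h hj c, fun h j hj c => h j c hj⟩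

variable [Fintype Fq] [Fintype C] [DecidableEq C]

theorem thickRank_agreeSet_lt {θ : R → F} (hθ : LinearIndependent Fq θ)
    (G : Matrix R (C × Fin α) Fq) {u v : Fin K → F} (huv : u ≠ v) :
    thickRank G (agreeSet (linearizedCode Fq θ G u) (linearizedCode Fq θ G v)) < K := by
  by_contra! h
  exact sub_ne_zero.2 huv <| eq_zero_of_le_ker_linearizedPoly Fq (finrank_evalSpan Fq hθ G _ ▸ h)
    ((subset_agreeSet_linearizedCode_iff Fq θ G u v _).1 subset_rfl)

theorem exists_subset_agreeSet_linearizedCode (θ : R → F) (G : Matrix R (C × Fin α) Fq)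
    {S : Finset C} (hS : thickRank G S < K) :
    ∃ u v : Fin K → F, u ≠ v ∧
      S ⊆ agreeSet (linearizedCode Fq θ G u) (linearizedCode Fq θ G v) := by
  obtain ⟨u, hu, hW⟩ := exists_ne_zero_le_ker_linearizedPoly Fq
    ((finrank_evalSpan_le Fq θ G S).trans_lt hS)
  exact ⟨u, 0, hu, (subset_agreeSet_linearizedCode_iff Fq θ G u 0 S).2 (by rwa [sub_zero])⟩

end LinearizedCode

theorem stmt_9_general (q nL α t K : ℕ)
    (hnL : 0 < nL) (hK : 0 < K)
    (a : ℕ → ℕ) (hper : ∀ i, a (i + nL) = a i)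
    (hmono : ∀ i j, i ≤ j → j < nL → a j ≤ a i)
    (hKtKL : K ≤ t * Pfun a nL)
    (F : Type*) [Field F] (Fq : Subfield F) [Fintype Fq]
    (hcard : Fintype.card Fq = q)
    (B : Matrix (Fin (Pfun a nL)) (Fin nL × Fin α) Fq)
    (hB : ∀ S : Finset (Fin nL), thickRank B S = Pfun a S.card)
    (G : Matrix (Fin t × Fin (Pfun a nL)) ((Fin t × Fin nL) × Fin α) Fq)
    (hG : ∀ b i b' j c, G (b, i) ((b', j), c) = if b = b' then B i (j, c) else 0)
    (θ : Fin t × Fin (Pfun a nL) → F) (hθ : LinearIndependent Fq θ)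
    (enc : (Fin K → F) → ((Fin t × Fin nL) × Fin α → F))
    (henc : ∀ u p, enc u p = ∑ i, (∑ l, u l * θ i ^ q ^ (l : ℕ)) * (G i p : F)) :
    Function.Injective enc
    ∧ (∀ u v, u ≠ v → t * nL - Pinv a K + 1 ≤ thickDist (enc u) (enc v))
    ∧ (∃ u v, u ≠ v ∧ thickDist (enc u) (enc v) = t * nL - Pinv a K + 1) := by
  subst hcard
  have hanti : AntitoneOn a (Set.Iio nL) := fun i _ j hj hij => hmono i j hij hj
  have hKP : K ≤ Pfun a (t * nL) := by simpa using (Pfun_mul_add hper t 0).symm ▸ hKtKL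
  have hPinv_pos := Pinv_pos hK hKP
  have hPinv_le := Pinv_le hKP
  have hEnc : enc = linearizedCode Fq θ G := by
    ext u p
    simp [henc, linearizedCode_apply, linearizedPoly_apply]
  have hrank (S) : thickRank G S = ∑ b, Pfun a (blockSlice S b).card := by
    simp_rw [thickRank_eq_sum_thickRank_blockSlice hG, hB]
  have hdist (u v) : thickDist (enc u) (enc v) = t * nL - (agreeSet (enc u) (enc v)).card := by
    simp [thickDist_eq_card_sub_card_agreeSet]
  have hagree (u v) (huv : u ≠ v) : (agreeSet (enc u) (enc v)).card < Pinv a K :=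
    lt_Pinv_of_Pfun_lt hKP <| (Pfun_card_le_sum_Pfun_card_blockSlice hnL hper hanti _).trans_lt <|
      hrank _ ▸ hEnc ▸ thickRank_agreeSet_lt Fq hθ G huv
  have hlower (u v) (huv : u ≠ v) : t * nL - Pinv a K + 1 ≤ thickDist (enc u) (enc v) := by
    have := hagree u v huv
    rw [hdist]
    omega
  refine ⟨fun u v h => by_contra fun huv => ?_, hlower, ?_⟩
  · simpa [h, thickDist_self] using hlower u v huv
  obtain ⟨S, hScard, hSP⟩ :=
    exists_card_eq_and_sum_Pfun_card_blockSlice hper (t := t) (by omega : Pinv a K - 1 ≤ _)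
  have hS : thickRank G S < K := hrank S ▸ hSP ▸ Pfun_lt_of_lt_Pinv (by omega)
  obtain ⟨u, v, huv, hsub⟩ := exists_subset_agreeSet_linearizedCode Fq θ G hS
  rw [← hEnc] at hsub
  have := Finset.card_le_card hsub
  exact ⟨u, v, huv, le_antisymm (by rw [hdist]; omega) (hlower u v huv)⟩

/-- **Theorem 2: all-symbol locality construction.**  Let `q` be a prime
power, `Fq` a subfield with `q` elements of a field `F` with `[F : Fq] = m`.  Let
`nL, α, t, K` be positive integers, `a_1 ≥ … ≥ a_{nL} ≥ 0` a profile with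
`K_L := P(nL) ≥ 1` (0-indexed periodic extension `a`), and assume `K ≤ t·K_L` and
`m ≥ t·K_L`.  Let `B` be a `K_L × (nL·α)` URA matrix over `Fq` with this profile, let
`G_BASIC` be the block-diagonal matrix with `t` diagonal copies of `B` (so `G_BASIC` has
`n := t·nL` thick columns of width `α`), and let `θ` be a family of `t·K_L` elements of `F`
linearly independent over `Fq`.  Let `C` consist of all vectors
`(f(θ_1),…,f(θ_{tK_L}))·G_BASIC` where `f` ranges over linearized polynomials of
`q`-degree at most `K - 1` over `F` (encoded by coefficient vectors `u : Fin K → F`).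
Then the encoding map is injective, and the minimum thick Hamming distance of `C`, viewed
as a length-`n` code over the alphabet `F^α`, is exactly `d_min = n - P^{inv}(K) + 1`;
in particular the construction attains the bound `d_min ≤ n - P^{inv}(K) + 1`. -/
theorem stmt_9 (q m nL α t K : ℕ) (hq : IsPrimePow q)
    (hnL : 0 < nL) (hα : 0 < α) (ht : 0 < t) (hK : 0 < K)
    (a : ℕ → ℕ) (hper : ∀ i, a (i + nL) = a i)
    (hmono : ∀ i j, i ≤ j → j < nL → a j ≤ a i)
    (hKL : 1 ≤ Pfun a nL)
    (hKtKL : K ≤ t * Pfun a nL) (hm : t * Pfun a nL ≤ m)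
    (F : Type*) [Field F] (Fq : Subfield F) [Fintype Fq]
    (hcard : Fintype.card Fq = q) (hmF : Module.finrank Fq F = m)
    (B : Matrix (Fin (Pfun a nL)) (Fin nL × Fin α) Fq)
    (hB : ∀ S : Finset (Fin nL), thickRank B S = Pfun a S.card)
    (G : Matrix (Fin t × Fin (Pfun a nL)) ((Fin t × Fin nL) × Fin α) Fq)
    (hG : ∀ b i b' j c, G (b, i) ((b', j), c) = if b = b' then B i (j, c) else 0)
    (θ : Fin t × Fin (Pfun a nL) → F) (hθ : LinearIndependent Fq θ)
    (enc : (Fin K → F) → ((Fin t × Fin nL) × Fin α → F))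
    (henc : ∀ u p, enc u p = ∑ i, (∑ l, u l * θ i ^ q ^ (l : ℕ)) * (G i p : F)) :
    Function.Injective enc
    ∧ (∀ u v, u ≠ v → t * nL - Pinv a K + 1 ≤ thickDist (enc u) (enc v))
    ∧ (∃ u v, u ≠ v ∧ thickDist (enc u) (enc v) = t * nL - Pinv a K + 1) :=
  stmt_9_general q nL α t K hnL hK a hper hmono hKtKL F Fq hcard B hB G hG θ hθ enc henc
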